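/- In the irreducible case with |G| > d, for any m ∈ [0,1], the bound f(m) = d/|G| (if m ≥ 1 − d/|G|) or m/(|G|/d − 1) (if m < 1 − d/|G|) is attained: for any unit vector φ, the choice ρ = |φ⟩⟨φ| and E₁ = f(m)|φ⟩⟨φ| satisfies E₁ ≥ 0, Σ_g U_g E₁ U_g† ≤ 1, Σ_{g≠1} tr(E₁ U_g ρ U_g†) ≤ m, and tr(E₁ ρ) = f(m). -/

import Mathlib

open Matrix BigOperators ComplexOrder

/-!
By Schur's lemma the group average of `ρ = |φ⟩⟨φ|` over the irreducible representation is the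
scalar `(|G|/d) • 1`. Hence `∑ g, U g E₁ U gᴴ = f |G|/d • 1 ≤ 1` because `f ≤ d/|G|`, and the
overlaps off the identity sum to `tr(E₁ · average) − tr(E₁ρ) = f (|G|/d − 1) ≤ m` by the choice
of `f`; finally `tr(E₁ρ) = f` since `ρ` is a projector of trace one.
-/

section UnitVector

variable {n : Type*} [Fintype n] {φ : n → ℂ}

lemma star_dotProduct_self_eq_one (hφ : ∑ a, ‖φ a‖ ^ 2 = 1) : star φ ⬝ᵥ φ = 1 := by
  simp only [dotProduct, Pi.star_apply, Complex.star_def, Complex.conj_mul']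
  exact_mod_cast hφ

lemma vecMulVec_star_mul_self (hφ : star φ ⬝ᵥ φ = 1) :
    vecMulVec φ (star φ) * vecMulVec φ (star φ) = vecMulVec φ (star φ) := by
  rw [vecMulVec_mul_vecMulVec, hφ, one_smul]

lemma trace_vecMulVec_star (hφ : star φ ⬝ᵥ φ = 1) : (vecMulVec φ (star φ)).trace = 1 := by
  rw [trace_vecMulVec, dotProduct_comm, hφ]

end UnitVector

section Twirl

variable {n : Type*} [Fintype n] [DecidableEq n]

lemma conjTranspose_mul_self_unitary (W : unitaryGroup n ℂ) :
    (W : Matrix n n ℂ)ᴴ * (W : Matrix n n ℂ) = 1 :=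
  UnitaryGroup.star_mul_self W

variable {G : Type*} [Group G] [Fintype G] (U : G →* unitaryGroup n ℂ)

def twirl (A : Matrix n n ℂ) : Matrix n n ℂ :=
  ∑ g, (U g : Matrix n n ℂ) * A * (U g : Matrix n n ℂ)ᴴ

lemma twirl_commute (A : Matrix n n ℂ) (h : G) :
    (U h : Matrix n n ℂ) * twirl U A = twirl U A * (U h : Matrix n n ℂ) := by
  rw [twirl, Finset.mul_sum, Finset.sum_mul,
    ← Equiv.sum_comp (Equiv.mulLeft h)
      (fun g => (U g : Matrix n n ℂ) * A * (U g : Matrix n n ℂ)ᴴ * U h)]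
  refine Finset.sum_congr rfl fun g _ => ?_
  simp only [Equiv.coe_mulLeft, map_mul, UnitaryGroup.mul_val, conjTranspose_mul, Matrix.mul_assoc,
    conjTranspose_mul_self_unitary, Matrix.mul_one]

lemma twirl_smul (c : ℂ) (A : Matrix n n ℂ) : twirl U (c • A) = c • twirl U A := by
  simp only [twirl, Finset.smul_sum, Matrix.mul_smul, Matrix.smul_mul]

lemma sum_compl_one_trace_mul_conj [DecidableEq G] (A B : Matrix n n ℂ) :
    ∑ g ∈ ({1}ᶜ : Finset G),
        (A * ((U g : Matrix n n ℂ) * B * (U g : Matrix n n ℂ)ᴴ)).trace =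
      (A * twirl U B).trace - (A * B).trace := by
  rw [eq_sub_iff_add_eq, twirl, Finset.mul_sum, trace_sum, ← Finset.sum_compl_add_sum {1},
    Finset.sum_singleton, map_one, UnitaryGroup.one_val, conjTranspose_one, Matrix.one_mul,
    Matrix.mul_one]

lemma trace_twirl (A : Matrix n n ℂ) : (twirl U A).trace = Fintype.card G * A.trace := by
  simp [twirl, trace_sum, trace_mul_cycle _ A, conjTranspose_mul_self_unitary]

/-- `hirr` is irreducibility in the form given by Schur's lemma. -/
lemma twirl_eq_smul_one (hn : Fintype.card n ≠ 0)
    (hirr : ∀ A : Matrix n n ℂ, (∀ g, (U g : Matrix n n ℂ) * A = A * U g) →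
      ∃ z : ℂ, A = z • 1)
    (A : Matrix n n ℂ) : twirl U A = (Fintype.card G * A.trace / Fintype.card n) • 1 := by
  obtain ⟨z, hz⟩ := hirr _ (twirl_commute U A)
  have htr := trace_twirl U A
  rw [hz, trace_smul, trace_one, smul_eq_mul] at htr
  rw [hz, ← htr, mul_div_cancel_right₀ _ (Nat.cast_ne_zero.mpr hn)]

end Twirl

noncomputable section SuccessBound

/-- The paper's `f(m)`, with `N = |G|`. -/
def successBound (d N m : ℝ) : ℝ :=
  if 1 - d / N ≤ m then d / N else m / (N / d - 1)

variable {d N m : ℝ}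

lemma one_sub_div_eq_div_mul (hd : 0 < d) (hN : 0 < N) : 1 - d / N = d / N * (N / d - 1) := by
  field_simp

lemma successBound_nonneg (hd : 0 < d) (hdN : d < N) (hm : 0 ≤ m) :
    0 ≤ successBound d N m := by
  have hN : 0 < N := hd.trans hdN
  have : 0 < N / d - 1 := by rw [sub_pos, one_lt_div hd]; exact hdN
  unfold successBound; split_ifs
  · positivity
  · exact div_nonneg hm this.le

lemma successBound_mul_le_one (hd : 0 < d) (hdN : d < N) :
    successBound d N m * (N / d) ≤ 1 := by
  have hN : 0 < N := hd.trans hdN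
  have : 0 < N / d - 1 := by rw [sub_pos, one_lt_div hd]; exact hdN
  suffices successBound d N m ≤ d / N by
    calc successBound d N m * (N / d) ≤ d / N * (N / d) := by gcongr
      _ = 1 := by field_simp
  unfold successBound; split_ifs with h
  · exact le_rfl
  · rw [not_le, one_sub_div_eq_div_mul hd hN, ← div_lt_iff₀ this] at h
    exact h.le

lemma successBound_mul_sub_one_le (hd : 0 < d) (hdN : d < N) :
    successBound d N m * (N / d - 1) ≤ m := by
  have hN : 0 < N := hd.trans hdN
  have : 0 < N / d - 1 := by rw [sub_pos, one_lt_div hd]; exact hdN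
  unfold successBound; split_ifs with h
  · rwa [← one_sub_div_eq_div_mul hd hN]
  · rw [div_mul_cancel₀ _ this.ne']

end SuccessBound

theorem success_probability_bound_attained_irreducible_general {G : Type*} [Group G] [Fintype G]
    [DecidableEq G] {d : ℕ} (hd : 0 < d) (hGd : d < Fintype.card G)
    (U : G →* Matrix.unitaryGroup (Fin d) ℂ)
    (hirr : ∀ A : Matrix (Fin d) (Fin d) ℂ,
      (∀ g, (U g : Matrix (Fin d) (Fin d) ℂ) * A = A * (U g : Matrix (Fin d) (Fin d) ℂ)) →
      ∃ z : ℂ, A = z • (1 : Matrix (Fin d) (Fin d) ℂ))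
    (m : ℝ) (hm0 : 0 ≤ m)
    (φ : Fin d → ℂ) (hφ : ∑ a, ‖φ a‖ ^ 2 = 1) :
    let f : ℝ := if 1 - (d : ℝ) / (Fintype.card G : ℝ) ≤ m then
        (d : ℝ) / (Fintype.card G : ℝ)
      else m / ((Fintype.card G : ℝ) / (d : ℝ) - 1)
    let ρ : Matrix (Fin d) (Fin d) ℂ := Matrix.vecMulVec φ (star φ)
    let E₁ : Matrix (Fin d) (Fin d) ℂ := (f : ℂ) • ρ
    E₁.PosSemidef ∧
      ((1 : Matrix (Fin d) (Fin d) ℂ) -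
        ∑ g : G, (U g : Matrix (Fin d) (Fin d) ℂ) * E₁ *
          ((U g : Matrix (Fin d) (Fin d) ℂ))ᴴ).PosSemidef ∧
      (∑ g ∈ ({1}ᶜ : Finset G),
        (E₁ * ((U g : Matrix (Fin d) (Fin d) ℂ) * ρ *
          ((U g : Matrix (Fin d) (Fin d) ℂ))ᴴ)).trace).re ≤ m ∧
      ((E₁ * ρ).trace).re = f := by
  intro f ρ E₁
  have hdR : (0 : ℝ) < d := by exact_mod_cast hd
  have hdG : (d : ℝ) < Fintype.card G := by exact_mod_cast hGd
  have hφ1 := star_dotProduct_self_eq_one hφ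
  have hρρ : ρ * ρ = ρ := vecMulVec_star_mul_self hφ1
  have htrρ : ρ.trace = 1 := trace_vecMulVec_star hφ1
  have hS : twirl U ρ = ((Fintype.card G / d : ℝ) : ℂ) • 1 := by
    rw [twirl_eq_smul_one U (by simpa using hd.ne') hirr, htrρ, Fintype.card_fin, mul_one]
    push_cast; rfl
  have hE₁ρ : (E₁ * ρ).trace = f := by
    rw [smul_mul, hρρ, trace_smul, htrρ, smul_eq_mul, mul_one]
  refine ⟨(posSemidef_vecMulVec_self_star φ).smul
    (Complex.zero_le_real.mpr (successBound_nonneg hdR hdG hm0)), ?_, ?_, ?_⟩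
  · change (1 - twirl U E₁).PosSemidef
    have h1 : 1 - twirl U E₁ = ((1 - f * (Fintype.card G / d) : ℝ) : ℂ) • 1 := by
      rw [twirl_smul, hS, smul_smul, Complex.ofReal_sub, Complex.ofReal_one, sub_smul, one_smul,
        Complex.ofReal_mul]
    rw [h1]
    exact PosSemidef.one.smul
      (Complex.zero_le_real.mpr (sub_nonneg.mpr (successBound_mul_le_one hdR hdG)))
  · have h2 : (E₁ * twirl U ρ).trace = ((f * (Fintype.card G / d) : ℝ) : ℂ) := by
      rw [hS, Matrix.mul_smul, Matrix.mul_one, trace_smul, trace_smul, htrρ]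
      push_cast; ring
    rw [sum_compl_one_trace_mul_conj, h2, hE₁ρ, ← Complex.ofReal_sub, Complex.ofReal_re,
      ← mul_sub_one]
    exact successBound_mul_sub_one_le hdR hdG
  · rw [hE₁ρ, Complex.ofReal_re]

/-- Attainability of the bound in the irreducible case with `|G| > d`: for any error margin
`m ∈ [0,1]` and any unit vector `φ`, taking `ρ = |φ⟩⟨φ|` and `E₁ = f(m)|φ⟩⟨φ|`, where
`f(m) = d/|G|` if `m ≥ 1 − d/|G|` and `f(m) = m/(|G|/d − 1)` otherwise, yields a valid
covariant POVM element meeting the error margin and achieving success probability `f(m)`. -/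
theorem success_probability_bound_attained_irreducible {G : Type*} [Group G] [Fintype G]
    [DecidableEq G] {d : ℕ} (hd : 0 < d) (hGd : d < Fintype.card G)
    (U : G →* Matrix.unitaryGroup (Fin d) ℂ)
    (hirr : ∀ A : Matrix (Fin d) (Fin d) ℂ,
      (∀ g, (U g : Matrix (Fin d) (Fin d) ℂ) * A = A * (U g : Matrix (Fin d) (Fin d) ℂ)) →
      ∃ z : ℂ, A = z • (1 : Matrix (Fin d) (Fin d) ℂ))
    (m : ℝ) (hm0 : 0 ≤ m) (hm1 : m ≤ 1)
    (φ : Fin d → ℂ) (hφ : ∑ a, ‖φ a‖ ^ 2 = 1) :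
    let f : ℝ := if 1 - (d : ℝ) / (Fintype.card G : ℝ) ≤ m then
        (d : ℝ) / (Fintype.card G : ℝ)
      else m / ((Fintype.card G : ℝ) / (d : ℝ) - 1)
    let ρ : Matrix (Fin d) (Fin d) ℂ := Matrix.vecMulVec φ (star φ)
    let E₁ : Matrix (Fin d) (Fin d) ℂ := (f : ℂ) • ρ
    E₁.PosSemidef ∧
      ((1 : Matrix (Fin d) (Fin d) ℂ) -
        ∑ g : G, (U g : Matrix (Fin d) (Fin d) ℂ) * E₁ *
          ((U g : Matrix (Fin d) (Fin d) ℂ))ᴴ).PosSemidef ∧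
      (∑ g ∈ ({1}ᶜ : Finset G),
        (E₁ * ((U g : Matrix (Fin d) (Fin d) ℂ) * ρ *
          ((U g : Matrix (Fin d) (Fin d) ℂ))ᴴ)).trace).re ≤ m ∧
      ((E₁ * ρ).trace).re = f :=
  success_probability_bound_attained_irreducible_general hd hGd U hirr m hm0 φ hφ
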